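/- Rank-one pseudoinverse update, in-span case: let X ∈ R^{d×d} be symmetric positive semidefinite and u ∈ R^d lie in the column space of X with 1 + u^T X^† u ≠ 0. Then (X + u u^T)^† = X^† - (X^† u u^T X^†)/(1 + u^T X^† u). -/
import Mathlib


open Matrix

/-- `B` is the Moore–Penrose pseudoinverse of `A`. -/
def IsMoorePenrose {m n : Type*} [Fintype m] [Fintype n]
    (A : Matrix m n ℝ) (B : Matrix n m ℝ) : Prop :=
  A * B * A = A ∧ B * A * B = B ∧ (A * B)ᵀ = A * B ∧ (B * A)ᵀ = B * A

private lemma mp_unique {n : Type*} [Fintype n] [DecidableEq n]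
    (A B C : Matrix n n ℝ) (hB : IsMoorePenrose A B) (hC : IsMoorePenrose A C) :
    B = C := by
  obtain ⟨hB1, hB2, hB3, hB4⟩ := hB
  obtain ⟨hC1, hC2, hC3, hC4⟩ := hC
  have hAB_AC : A * B = A * C := by
    have h1 : A * B = (A * B) * (A * C) := by
      calc A * B = (A * B)ᵀ := hB3.symm
        _ = (A * C * A * B)ᵀ := by rw [hC1]
        _ = ((A * C) * (A * B))ᵀ := by rw [Matrix.mul_assoc (A * C) A B]
        _ = (A * B)ᵀ * (A * C)ᵀ := Matrix.transpose_mul _ _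
        _ = (A * B) * (A * C) := by rw [hB3, hC3]
    have h2 : A * C = (A * B) * (A * C) := by
      calc A * C = (A * B * A) * C := by rw [hB1]
        _ = (A * B) * (A * C) := by rw [Matrix.mul_assoc, Matrix.mul_assoc]
    rw [h1, ← h2]
  have hBA_CA : B * A = C * A := by
    have h1 : B * A = (C * A) * (B * A) := by
      calc B * A = (B * A)ᵀ := hB4.symm
        _ = (B * (A * C * A))ᵀ := by rw [hC1]
        _ = ((B * A) * (C * A))ᵀ := by
              rw [show B * (A * C * A) = (B * A) * (C * A) from by noncomm_ring]
        _ = (C * A)ᵀ * (B * A)ᵀ := Matrix.transpose_mul _ _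
        _ = (C * A) * (B * A) := by rw [hB4, hC4]
    have h2 : C * A = (C * A) * (B * A) := by
      calc C * A = C * (A * B * A) := by rw [hB1]
        _ = (C * A) * (B * A) := by noncomm_ring
    rw [h1, ← h2]
  calc B = B * A * B := hB2.symm
    _ = B * (A * B) := by rw [Matrix.mul_assoc]
    _ = B * (A * C) := by rw [hAB_AC]
    _ = (B * A) * C := by rw [Matrix.mul_assoc]
    _ = (C * A) * C := by rw [hBA_CA]
    _ = C := hC2

private lemma mul_vecMulVec' {n : Type*} [Fintype n]
    (M : Matrix n n ℝ) (u v : n → ℝ) :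
    M * vecMulVec u v = vecMulVec (M *ᵥ u) v := by
  ext i j
  simp only [Matrix.mul_apply, vecMulVec_apply, Matrix.mulVec, dotProduct,
    Finset.sum_mul]
  exact Finset.sum_congr rfl fun k _ => by ring

private lemma vecMulVec_mul' {n : Type*} [Fintype n]
    (M : Matrix n n ℝ) (u v : n → ℝ) :
    vecMulVec u v * M = vecMulVec u (v ᵥ* M) := by
  ext i j
  simp only [Matrix.mul_apply, vecMulVec_apply, Matrix.vecMul, dotProduct,
    Finset.mul_sum]
  exact Finset.sum_congr rfl fun k _ => by ring

private lemma vecMulVec_mul_vecMulVec' {n : Type*} [Fintype n]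
    (u v w z : n → ℝ) :
    vecMulVec u v * vecMulVec w z = (v ⬝ᵥ w) • vecMulVec u z := by
  ext i j
  simp only [Matrix.mul_apply, vecMulVec_apply, Matrix.smul_apply, smul_eq_mul,
    dotProduct, Finset.sum_mul]
  exact Finset.sum_congr rfl fun k _ => by ring

/-- Rank-one pseudoinverse update, in-span case:
`(X + uuᵀ)† = X† - X†uuᵀX†/(1 + uᵀX†u)` when `u ∈ range X`. -/
theorem pinv_rank_one_update_in_span {d : ℕ}
    (X K : Matrix (Fin d) (Fin d) ℝ)
    (hXsym : X.IsSymm) (hXpsd : X.PosSemidef)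
    (hK : IsMoorePenrose X K)
    (u : Fin d → ℝ) (hu : ∃ w : Fin d → ℝ, X *ᵥ w = u)
    (hdenom : 1 + u ⬝ᵥ (K *ᵥ u) ≠ 0) :
    IsMoorePenrose (X + vecMulVec u u)
      (K - (1 + u ⬝ᵥ (K *ᵥ u))⁻¹ • (K * vecMulVec u u * K)) := by
  obtain ⟨hK1, hK2, hK3, hK4⟩ := hK
  have hXs : Xᵀ = X := hXsym
  -- K is symmetric
  have hKsym : Kᵀ = K := by
    have hKt : IsMoorePenrose X Kᵀ := by
      refine ⟨?_, ?_, ?_, ?_⟩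
      · have := congrArg Matrix.transpose hK1
        simpa [Matrix.transpose_mul, hXs, Matrix.mul_assoc] using this
      · have := congrArg Matrix.transpose hK2
        simpa [Matrix.transpose_mul, hXs, Matrix.mul_assoc] using this
      · calc (X * Kᵀ)ᵀ = K * Xᵀ := by rw [Matrix.transpose_mul, Matrix.transpose_transpose]
          _ = K * X := by rw [hXs]
          _ = (K * X)ᵀ := hK4.symm
          _ = Xᵀ * Kᵀ := by rw [Matrix.transpose_mul]
          _ = X * Kᵀ := by rw [hXs]
      · calc (Kᵀ * X)ᵀ = Xᵀ * K := by rw [Matrix.transpose_mul, Matrix.transpose_transpose]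
          _ = X * K := by rw [hXs]
          _ = (X * K)ᵀ := hK3.symm
          _ = Kᵀ * Xᵀ := by rw [Matrix.transpose_mul]
          _ = Kᵀ * X := by rw [hXs]
    exact mp_unique X Kᵀ K hKt ⟨hK1, hK2, hK3, hK4⟩
  have hcomm : X * K = K * X := by
    calc X * K = (X * K)ᵀ := hK3.symm
      _ = Kᵀ * Xᵀ := by rw [Matrix.transpose_mul]
      _ = K * X := by rw [hKsym, hXs]
  set c : ℝ := 1 + u ⬝ᵥ (K *ᵥ u) with hc
  set U : Matrix (Fin d) (Fin d) ℝ := vecMulVec u u with hU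
  set B : Matrix (Fin d) (Fin d) ℝ := K - c⁻¹ • (K * U * K) with hB
  have hUsym : Uᵀ = U := by
    ext i j; simp [hU, vecMulVec_apply, mul_comm]
  have hBsym : Bᵀ = B := by
    rw [hB]
    rw [Matrix.transpose_sub, Matrix.transpose_smul, Matrix.transpose_mul,
      Matrix.transpose_mul, hKsym, hUsym, Matrix.mul_assoc]
  -- projection fact
  have hPu : (X * K) *ᵥ u = u := by
    obtain ⟨w, hw⟩ := hu
    calc (X * K) *ᵥ u = (X * K) *ᵥ (X *ᵥ w) := by rw [hw]
      _ = (X * K * X) *ᵥ w := by rw [Matrix.mulVec_mulVec]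
      _ = X *ᵥ w := by rw [hK1]
      _ = u := hw
  have f1 : X * K * U = U := by
    rw [hU, mul_vecMulVec', hPu]
  have huK : u ᵥ* K = K *ᵥ u := by
    conv_lhs => rw [← hKsym]
    rw [Matrix.vecMul_transpose]
  have f3 : U * K * U = (c - 1) • U := by
    rw [hU, vecMulVec_mul', vecMulVec_mul_vecMulVec', huK]
    congr 1
    rw [hc, dotProduct_comm]
    ring
  -- the key product
  have hAB : (X + U) * B = X * K := by
    have e1 : X * (K * U * K) = U * K := by
      calc X * (K * U * K) = (X * K * U) * K := by
            rw [Matrix.mul_assoc, Matrix.mul_assoc, Matrix.mul_assoc]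
        _ = U * K := by rw [f1]
    have e2 : U * (K * U * K) = (c - 1) • (U * K) := by
      calc U * (K * U * K) = (U * K * U) * K := by
            rw [Matrix.mul_assoc, Matrix.mul_assoc, Matrix.mul_assoc]
        _ = ((c - 1) • U) * K := by rw [f3]
        _ = (c - 1) • (U * K) := by rw [Matrix.smul_mul]
    have hscal : c⁻¹ * (c - 1) = 1 - c⁻¹ := by
      field_simp
    calc (X + U) * B
        = X * K + U * K - c⁻¹ • (X * (K * U * K)) - c⁻¹ • (U * (K * U * K)) := by
          rw [hB, Matrix.mul_sub, Matrix.add_mul, Matrix.add_mul]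
          simp only [Matrix.mul_smul]
          abel
      _ = X * K + U * K - c⁻¹ • (U * K) - c⁻¹ • ((c - 1) • (U * K)) := by rw [e1, e2]
      _ = X * K + U * K - c⁻¹ • (U * K) - ((1 : ℝ) - c⁻¹) • (U * K) := by
          rw [smul_smul, hscal]
      _ = X * K := by rw [sub_smul, one_smul]; abel
  have hBA : B * (X + U) = X * K := by
    calc B * (X + U) = Bᵀ * (X + U)ᵀ := by
          rw [hBsym, Matrix.transpose_add, hXs, hUsym]
      _ = ((X + U) * B)ᵀ := by rw [Matrix.transpose_mul]
      _ = (X * K)ᵀ := by rw [hAB]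
      _ = X * K := hK3
  have e3 : K * X * (K * U * K) = K * U * K := by
    calc K * X * (K * U * K) = (K * X * K) * U * K := by noncomm_ring
      _ = K * U * K := by rw [hK2]
  refine ⟨?_, ?_, ?_, ?_⟩
  · rw [hAB, Matrix.mul_add, hK1, f1]
  · rw [hBA, hcomm, hB, Matrix.mul_sub, Matrix.mul_smul, hK2, e3]
  · rw [hAB]; exact hK3
  · rw [hBA]; exact hK3
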